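/- The limiting self-interaction value of the Ewald-split Stokeslet is lim_{|r|→0} ( G_{jl}(r) − 4π G^R_{jl}(r, ξ) ) = ( γ/2 + log ξ + 1 ) δ_{jl}, where γ is the Euler–Mascheroni constant. -/

import Mathlib

open Filter Topology MeasureTheory

/-- The exponential integral `E₁(x) = ∫_x^∞ e^{-t}/t dt`. -/
noncomputable def expInt (x : ℝ) : ℝ := ∫ t in Set.Ioi x, Real.exp (-t) / t

/-- The 2D Stokeslet tensor `G_{jl}(r) = -δ_{jl} log|r| + r_j r_l / |r|²`. -/
noncomputable def stokeslet (j l : Fin 2) (r : EuclideanSpace ℝ (Fin 2)) : ℝ :=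
  -(if j = l then (1 : ℝ) else 0) * Real.log ‖r‖ + r j * r l / ‖r‖ ^ 2

/-- `4π G^R_{jl}(r,ξ) = e^{-ξ²|r|²}( r_j r_l/|r|² − δ_{jl} ) + (δ_{jl}/2) E₁(ξ²|r|²)`. -/
noncomputable def fourPiEwaldRealStokeslet (j l : Fin 2) (r : EuclideanSpace ℝ (Fin 2))
    (ξ : ℝ) : ℝ :=
  Real.exp (-ξ ^ 2 * ‖r‖ ^ 2) * (r j * r l / ‖r‖ ^ 2 - (if j = l then (1 : ℝ) else 0))
    + ((if j = l then (1 : ℝ) else 0) / 2) * expInt (ξ ^ 2 * ‖r‖ ^ 2)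

/-!
Integrating by parts, `E₁(x) = ∫_x^∞ e^{-t} log t dt - e^{-x} log x` for `x > 0`, and
`∫_0^∞ e^{-t} log t dt = Γ'(1) = -γ`; hence `E₁(x) + log x → -γ` as `x → 0⁺`.
Along `r = εd` the direction term `r_j r_l / |r|² = d_j d_l` is constant, and with `x = ξ²ε²`
(so that `log ε = (log x) / 2 - log ξ`) the difference of the two kernels is
`d_j d_l (1 - e^{-x}) + δ_{jl} (e^{-x} + log ξ - (E₁(x) + log x) / 2)`,
which tends to `δ_{jl} (1 + log ξ + γ / 2)`.
-/

open Set Real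

lemma tendsto_setIntegral_Ioi_nhdsGT {E : Type*} [NormedAddCommGroup E] [NormedSpace ℝ E]
    {g : ℝ → E} {a : ℝ} (hg : IntegrableOn g (Ioi a)) :
    Tendsto (fun x => ∫ t in Ioi x, g t) (𝓝[>] a) (𝓝 (∫ t in Ioi a, g t)) := by
  have hprim : Tendsto (fun x => ∫ t in a..x, g t) (𝓝[>] a) (𝓝 0) := by
    have hint : IntervalIntegrable g volume a (a + 1) :=
      (intervalIntegrable_iff_integrableOn_Ioc_of_le (by linarith)).2
        (hg.mono_set Ioc_subset_Ioi_self)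
    have hcont := intervalIntegral.continuousOn_primitive_interval' hint left_mem_uIcc a
      left_mem_uIcc
    rw [uIcc_of_le (by linarith)] at hcont
    simpa using (hcont.mono_of_mem_nhdsWithin (Icc_mem_nhdsGT (by linarith))).tendsto
  have hlim := hprim.const_sub (∫ t in Ioi a, g t)
  rw [sub_zero] at hlim
  refine hlim.congr' ?_
  filter_upwards [self_mem_nhdsWithin] with x (hx : a < x)
  rw [← intervalIntegral.integral_interval_add_Ioi hg (hg.mono_set (Ioi_subset_Ioi hx.le))]
  abel

lemma abs_log_le_two_mul_rpow_neg_half_add {t : ℝ} (ht : 0 < t) :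
    |log t| ≤ 2 * t ^ (-(1 / 2) : ℝ) + t := by
  rcases le_total 0 (log t) with h | h
  · rw [abs_of_nonneg h]
    linarith [log_le_sub_one_of_pos ht, rpow_pos_of_pos ht (-(1 / 2) : ℝ)]
  · have := log_le_sub_one_of_pos (rpow_pos_of_pos ht (-(1 / 2) : ℝ))
    rw [log_rpow ht] at this
    rw [abs_of_nonpos h]
    linarith

lemma integrableOn_exp_neg_mul_log_Ioi_zero :
    IntegrableOn (fun t => exp (-t) * log t) (Ioi 0) := by
  have hbound := ((GammaIntegral_convergent (s := 1 / 2) (by norm_num)).const_mul 2).add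
    (GammaIntegral_convergent (s := 2) (by norm_num))
  refine hbound.mono' (by fun_prop) ?_
  filter_upwards [ae_restrict_mem measurableSet_Ioi] with t (ht : 0 < t)
  calc ‖exp (-t) * log t‖ = exp (-t) * |log t| := by
        rw [norm_mul, norm_of_nonneg (exp_pos _).le, norm_eq_abs]
    _ ≤ exp (-t) * (2 * t ^ (-(1 / 2) : ℝ) + t) := by
        gcongr
        exact abs_log_le_two_mul_rpow_neg_half_add ht
    _ = 2 * (exp (-t) * t ^ ((1 / 2 : ℝ) - 1)) + exp (-t) * t ^ ((2 : ℝ) - 1) := by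
        rw [show (1 / 2 : ℝ) - 1 = -(1 / 2) by norm_num, show (2 : ℝ) - 1 = 1 by norm_num,
          rpow_one]
        ring

lemma integral_exp_neg_mul_log_Ioi_zero :
    ∫ t in Ioi (0 : ℝ), exp (-t) * log t = -eulerMascheroniConstant := by
  have hcomplex := Complex.hasDerivAt_GammaIntegral (s := 1) one_pos
  have hintegrand : (∫ t : ℝ in Ioi 0, (t : ℂ) ^ ((1 : ℂ) - 1) * (log t * exp (-t)))
      = ((∫ t in Ioi (0 : ℝ), exp (-t) * log t : ℝ) : ℂ) := by
    rw [← integral_complex_ofReal]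
    refine setIntegral_congr_fun measurableSet_Ioi fun t _ => ?_
    push_cast
    rw [sub_self, Complex.cpow_zero, one_mul, mul_comm]
  rw [hintegrand] at hcomplex
  have hGamma : (fun x : ℝ => (Complex.GammaIntegral x).re) =ᶠ[𝓝 1] Gamma := by
    filter_upwards [Ioi_mem_nhds one_pos] with x (hx : 0 < x)
    rw [← Complex.Gamma_eq_integral (by simpa using hx), Gamma]
  have hreal := (hcomplex.real_of_complex).congr_of_eventuallyEq hGamma.symm
  rw [Complex.ofReal_re] at hreal
  exact hreal.unique hasDerivAt_Gamma_one

lemma integrableOn_exp_neg_div_Ioi {x : ℝ} (hx : 0 < x) :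
    IntegrableOn (fun t => exp (-t) / t) (Ioi x) := by
  refine ((exp_neg_integrableOn_Ioi x one_pos).const_mul x⁻¹).mono'
    ((by fun_prop : Measurable fun t => exp (-t) / t).aestronglyMeasurable) ?_
  filter_upwards [ae_restrict_mem measurableSet_Ioi] with t (ht : x < t)
  rw [norm_div, norm_of_nonneg (exp_pos _).le, norm_of_nonneg (hx.trans ht).le, neg_one_mul,
    div_eq_mul_inv, mul_comm]
  gcongr

lemma tendsto_exp_neg_mul_log_atTop : Tendsto (fun t => exp (-t) * log t) atTop (𝓝 0) := by
  refine squeeze_zero' ?_ ?_ (tendsto_pow_mul_exp_neg_atTop_nhds_zero 1)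
  · filter_upwards [eventually_ge_atTop 1] with t ht
    exact mul_nonneg (exp_pos _).le (log_nonneg ht)
  · filter_upwards [eventually_gt_atTop 0] with t ht
    rw [pow_one, mul_comm t]
    exact mul_le_mul_of_nonneg_left ((log_le_sub_one_of_pos ht).trans (by linarith))
      (exp_pos _).le

lemma hasDerivAt_exp_neg_mul_log {t : ℝ} (ht : t ≠ 0) :
    HasDerivAt (fun t => exp (-t) * log t) (exp (-t) / t - exp (-t) * log t) t :=
  (((hasDerivAt_neg t).exp).mul (hasDerivAt_log ht)).congr_deriv (by ring)

lemma expInt_eq_setIntegral_exp_neg_mul_log_sub {x : ℝ} (hx : 0 < x) :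
    expInt x = (∫ t in Ioi x, exp (-t) * log t) - exp (-x) * log x := by
  have hlog := integrableOn_exp_neg_mul_log_Ioi_zero.mono_set (Ioi_subset_Ioi hx.le)
  have hparts := integral_Ioi_of_hasDerivAt_of_tendsto (f := fun t => exp (-t) * log t)
    (((continuous_exp.comp continuous_neg).continuousAt.mul
      (continuousAt_log hx.ne')).continuousWithinAt)
    (fun t (ht : x < t) => hasDerivAt_exp_neg_mul_log (hx.trans ht).ne')
    ((integrableOn_exp_neg_div_Ioi hx).sub hlog) tendsto_exp_neg_mul_log_atTop
  rw [integral_sub (integrableOn_exp_neg_div_Ioi hx) hlog] at hparts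
  rw [expInt]
  linarith

lemma tendsto_one_sub_exp_neg_mul_log_nhdsGT_zero :
    Tendsto (fun x => (1 - exp (-x)) * log x) (𝓝[>] 0) (𝓝 0) := by
  have hmulLog : Tendsto (fun x => x * log x) (𝓝[>] 0) (𝓝 0) := by
    simpa using continuous_mul_log.continuousAt.tendsto.mono_left (nhdsWithin_le_nhds (a := 0))
  refine squeeze_zero_norm' ?_ (by simpa only [norm_zero] using hmulLog.norm)
  filter_upwards [self_mem_nhdsWithin] with x (hx : 0 < x)
  rw [norm_mul, norm_mul]
  gcongr
  rw [norm_of_nonneg (sub_nonneg.2 (exp_le_one_iff.2 (by linarith))), norm_of_nonneg hx.le]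
  linarith [one_sub_le_exp_neg x]

lemma tendsto_expInt_add_log_nhdsGT_zero :
    Tendsto (fun x => expInt x + log x) (𝓝[>] 0) (𝓝 (-eulerMascheroniConstant)) := by
  have htail := tendsto_setIntegral_Ioi_nhdsGT integrableOn_exp_neg_mul_log_Ioi_zero
  rw [integral_exp_neg_mul_log_Ioi_zero] at htail
  have hsum := htail.add tendsto_one_sub_exp_neg_mul_log_nhdsGT_zero
  rw [add_zero] at hsum
  refine hsum.congr' ?_
  filter_upwards [self_mem_nhdsWithin] with x (hx : 0 < x)
  rw [expInt_eq_setIntegral_exp_neg_mul_log_sub hx]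
  ring

lemma stokeslet_sub_fourPiEwaldRealStokeslet_smul {ξ ε : ℝ} (hξ : ξ ≠ 0) (hε : 0 < ε)
    {d : EuclideanSpace ℝ (Fin 2)} (hd : ‖d‖ = 1) (j l : Fin 2) :
    stokeslet j l (ε • d) - fourPiEwaldRealStokeslet j l (ε • d) ξ
      = d j * d l * (1 - exp (-ξ ^ 2 * ε ^ 2))
        + (if j = l then 1 else 0) * (exp (-ξ ^ 2 * ε ^ 2) + log ξ
          - (expInt (ξ ^ 2 * ε ^ 2) + log (ξ ^ 2 * ε ^ 2)) / 2) := by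
  have hnorm : ‖ε • d‖ = ε := by rw [norm_smul, hd, norm_of_nonneg hε.le, mul_one]
  have hlog : log (ξ ^ 2 * ε ^ 2) = 2 * log ξ + 2 * log ε := by
    rw [log_mul (by positivity) (by positivity), log_pow, log_pow, Nat.cast_ofNat]
  simp only [stokeslet, fourPiEwaldRealStokeslet, hnorm, hlog, PiLp.smul_apply, smul_eq_mul]
  field_simp
  ring

/-- Limiting self-interaction of the Ewald-split Stokeslet, along a fixed direction `d`:
`lim_{ε→0⁺} ( G_{jl}(εd) − 4π G^R_{jl}(εd, ξ) ) = ( γ/2 + log ξ + 1 ) δ_{jl}`,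
where `γ` is the Euler–Mascheroni constant. -/
theorem ewald_stokeslet_self_interaction (ξ : ℝ) (hξ : 0 < ξ)
    (d : EuclideanSpace ℝ (Fin 2)) (hd : ‖d‖ = 1) (j l : Fin 2) :
    Tendsto
      (fun ε : ℝ => stokeslet j l (ε • d) - fourPiEwaldRealStokeslet j l (ε • d) ξ)
      (𝓝[>] (0 : ℝ))
      (𝓝 ((Real.eulerMascheroniConstant / 2 + Real.log ξ + 1) *
        (if j = l then (1 : ℝ) else 0))) := by
  have hscale : Tendsto (fun ε : ℝ => ξ ^ 2 * ε ^ 2) (𝓝[>] 0) (𝓝[>] 0) := by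
    refine tendsto_nhdsWithin_iff.2 ⟨?_, ?_⟩
    · exact ((by fun_prop : Continuous fun ε : ℝ => ξ ^ 2 * ε ^ 2).tendsto' 0 0
        (by simp)).mono_left nhdsWithin_le_nhds
    · filter_upwards [self_mem_nhdsWithin] with ε (hε : 0 < ε)
      exact mul_pos (pow_pos hξ 2) (pow_pos hε 2)
  have hexp : Tendsto (fun ε : ℝ => exp (-ξ ^ 2 * ε ^ 2)) (𝓝[>] 0) (𝓝 1) :=
    ((by fun_prop : Continuous fun ε : ℝ => exp (-ξ ^ 2 * ε ^ 2)).tendsto' 0 1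
      (by simp)).mono_left nhdsWithin_le_nhds
  have hE := (tendsto_expInt_add_log_nhdsGT_zero.comp hscale).div_const 2
  have hlim := ((hexp.const_sub 1).const_mul (d j * d l)).add
    (((hexp.add_const (log ξ)).sub hE).const_mul (if j = l then (1 : ℝ) else 0))
  convert hlim.congr' ?_ using 2
  · ring
  filter_upwards [self_mem_nhdsWithin] with ε (hε : 0 < ε)
  exact (stokeslet_sub_fourPiEwaldRealStokeslet_smul hξ.ne' hε hd j l).symm
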